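/- arXiv:1911.12960 — 4 statements merged into one kernel-verified Lean document; each statement's English description precedes it below -/
import Mathlib

section
/- A system of t functions f_1,…,f_t : Q^s → Q is strong-orthogonal if and only if the set C = {(x_1,…,x_s, f_1(x),…,f_t(x)) : x ∈ Q^s} is an MDS(t, t+s, q) code. -/
/-!
A point of the graph `C` is determined by its first `s` coordinates `x`, and its remaining
coordinates are the values `f j x`. So fixing the coordinates of `C` in a set `S ⊆ Fin (s + t)`
amounts to fixing the variables `x i` for `i` in the left part `T` of `S` and the values `f j x`
for `j` in its right part `I`, where `|T| + |I| = |S|`: the MDS condition for `S` is the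
orthogonality condition for `(T, I)`.
-/

-- A `t`-dimensional axis-aligned plane is given by fixing the coordinates in a set `S` of size
-- `d - t` to the values of `a`.
def IsMDS {Q : Type} (t d : ℕ) (C : Finset (Fin d → Q)) : Prop :=
  ∀ S : Finset (Fin d), S.card = d - t → ∀ a : Fin d → Q,
    ∃! x, x ∈ C ∧ ∀ i ∈ S, x i = a i

-- `T` indexes the variables substituted by the constants `c`, `I` the chosen functions.
def StrongOrthogonal {Q : Type} (s t : ℕ) (f : Fin t → (Fin s → Q) → Q) : Prop :=
  ∀ (T : Finset (Fin s)) (I : Finset (Fin t)), T.card + I.card = s →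
    ∀ (c : Fin s → Q) (b : Fin t → Q),
      ∃! x : Fin s → Q, (∀ i ∈ T, x i = c i) ∧ (∀ j ∈ I, f j x = b j)

open Finset Function

theorem Function.Injective.existsUnique_mem_image_univ_iff {α β : Type*} [Fintype α]
    [DecidableEq β] {g : α → β} (hg : Injective g) {p : β → Prop} :
    (∃! y, y ∈ univ.image g ∧ p y) ↔ ∃! x, p (g x) := by
  simp only [mem_image, mem_univ, true_and]
  constructor
  · rintro ⟨_, ⟨⟨x, rfl⟩, hx⟩, huniq⟩
    exact ⟨x, hx, fun x' hx' => hg (huniq _ ⟨⟨x', rfl⟩, hx'⟩)⟩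
  · rintro ⟨x, hx, huniq⟩
    refine ⟨g x, ⟨⟨x, rfl⟩, hx⟩, ?_⟩
    rintro _ ⟨⟨x', rfl⟩, hx'⟩
    rw [huniq x' hx']

theorem Finset.exists_map_finSumFinEquiv_disjSum {m n : ℕ} (S : Finset (Fin (m + n))) :
    ∃ (T : Finset (Fin m)) (I : Finset (Fin n)),
      (T.disjSum I).map finSumFinEquiv.toEmbedding = S ∧ #T + #I = #S := by
  refine ⟨(S.map finSumFinEquiv.symm.toEmbedding).toLeft,
    (S.map finSumFinEquiv.symm.toEmbedding).toRight, ?_, ?_⟩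
  · rw [toLeft_disjSum_toRight, map_map]
    simp
  · rw [card_toLeft_add_card_toRight, card_map]

theorem Fin.append_eq_append_on_map_disjSum_iff {α : Type*} {m n : ℕ} (x c : Fin m → α)
    (y b : Fin n → α) (T : Finset (Fin m)) (I : Finset (Fin n)) :
    (∀ k ∈ (T.disjSum I).map finSumFinEquiv.toEmbedding, append x y k = append c b k) ↔
      (∀ i ∈ T, x i = c i) ∧ ∀ j ∈ I, y j = b j := by
  simp only [forall_mem_map, Equiv.coe_toEmbedding, Sum.forall, inl_mem_disjSum, inr_mem_disjSum,
    finSumFinEquiv_apply_left, finSumFinEquiv_apply_right, append_left, append_right]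

theorem existsUnique_mem_graph_fixing_iff {Q : Type*} [Fintype Q] [DecidableEq Q] {s t : ℕ}
    (f : Fin t → (Fin s → Q) → Q) (T : Finset (Fin s)) (I : Finset (Fin t)) (c : Fin s → Q)
    (b : Fin t → Q) :
    (∃! y, y ∈ univ.image (fun x => Fin.append x fun j => f j x) ∧
        ∀ k ∈ (T.disjSum I).map finSumFinEquiv.toEmbedding, y k = Fin.append c b k) ↔
      ∃! x, (∀ i ∈ T, x i = c i) ∧ ∀ j ∈ I, f j x = b j := by
  have graph_injective : Injective fun x => Fin.append x fun j => f j x :=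
    fun x x' h => funext fun i => by simpa using congrFun h (Fin.castAdd t i)
  simp_rw [graph_injective.existsUnique_mem_image_univ_iff,
    Fin.append_eq_append_on_map_disjSum_iff]

/-- the system `f_1, …, f_t` is strong-orthogonal iff the graph
`C = {(x, f_1(x), …, f_t(x)) : x ∈ Q^s}` is an MDS(t, s+t, q) code. -/
theorem stmt_2 {Q : Type} [Fintype Q] [DecidableEq Q] (s t : ℕ)
    (f : Fin t → (Fin s → Q) → Q) :
    StrongOrthogonal s t f ↔
      IsMDS t (s + t) ((Finset.univ : Finset (Fin s → Q)).image
        fun x => Fin.addCases (motive := fun _ => Q) x (fun j => f j x)) := by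
  constructor
  · intro hf S hS a
    obtain ⟨T, I, rfl, hcard⟩ := S.exists_map_finSumFinEquiv_disjSum
    rw [← Fin.append_castAdd_natAdd (f := a)]
    exact (existsUnique_mem_graph_fixing_iff f T I _ _).2 (hf T I (by omega) _ _)
  · intro hC T I hTI c b
    exact (existsUnique_mem_graph_fixing_iff f T I c b).1 (hC _ (by simp [hTI]) _)
end

section
/- Under the hypotheses: M_2 ⊂ M_1 ⊂ M is a super MDS(2,5,p) code (M has distance 3, M_1 distance 4, M_2 distance 5); D is an MDS(2,5,q) code over Q_q; E is an MDS(2,5,q_1−q) code over alphabet A with |A| = q_1 − q; F is an MDS(2,5,q_1) code with 4-A-hole over Q_q ∪ A; G is an MDS(2,5,q_1) code with 5-A-hole over Q_q ∪ A — the set C = E ∪ (M_2 ×_A G) ∪ ((M_1 \ M_2) ×_A F) ∪ ((M \ M_1) × D) is an MDS(2,5,(p−1)q + q_1) code. -/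
/-!
Two distinct words of `C` are compared according to the pieces they come from. In a glued
piece `M' ×_A Z`, words with equal `M'`-components are as far apart as their `Z`-components;
words with different `M'`-components differ wherever those differ and the `Z`-component avoids
`A`. The holes leave at most two `A`-coordinates in a word of `G` and at most one in a word of
`F`, which is exactly what the distances 5 and 4 of `M₂` and `M₁` absorb, and the same
estimates keep distinct pieces at distance at least 3. Since all these separations are
positive, the pieces are disjoint and the maps onto them injective, so
`|C| = a³ + p (q₁³ - a³) + (p² - p)(q³ + 3q²a) + (p³ - p²) q³ = ((p - 1) q + q₁)³`.
-/

/-- The Hamming `k`-neighborhood of a set `C ⊆ Q^d`. -/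
def hammingNbhd {Q : Type} [DecidableEq Q] {d : ℕ} (k : ℕ) (C : Set (Fin d → Q)) :
    Set (Fin d → Q) :=
  {x | ∃ y ∈ C, hammingDist x y ≤ k}

/-- The gluing product `×_A` of the paper, coordinatewise `π_A`:
the alphabet `Q_{q₁}` is modelled as `Fin q ⊕ Fin a` (with `A = Fin a`, `a = q₁ - q`),
and `π_A(x,y) = (x,y)` if `y ∉ A`, `π_A(x,y) = y` if `y ∈ A`;
the resulting alphabet is `(Fin p × Fin q) ⊕ Fin a`, of size `pq + (q₁ - q)`. -/
def glue (p q a : ℕ) (z : (Fin 5 → Fin p) × (Fin 5 → Fin q ⊕ Fin a)) :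
    Fin 5 → (Fin p × Fin q) ⊕ Fin a := fun i =>
  match z.2 i with
  | Sum.inl y => Sum.inl (z.1 i, y)
  | Sum.inr b => Sum.inr b

open Finset

section Hamming

variable {ι P α β γ : Type*} [Fintype ι] [DecidableEq α] [DecidableEq β] [DecidableEq γ]

theorem hammingDist_le_hammingDist_of_ne {x y : ι → α} {x' y' : ι → β}
    (h : ∀ i, x i ≠ y i → x' i ≠ y' i) : hammingDist x y ≤ hammingDist x' y' := by
  unfold hammingDist
  gcongr with i
  exact not_imp_not.1 (h i)

def IsHammingSeparated (d : ℕ) (C : Finset (ι → α)) : Prop :=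
  ∀ x ∈ C, ∀ y ∈ C, x ≠ y → d ≤ hammingDist x y

def HammingApart (d : ℕ) (A B : Finset (ι → α)) : Prop :=
  ∀ x ∈ A, ∀ y ∈ B, d ≤ hammingDist x y

def HammingSeparatesOn (d : ℕ) (f : P → ι → α) (s : Finset P) : Prop :=
  ∀ u ∈ s, ∀ v ∈ s, u ≠ v → d ≤ hammingDist (f u) (f v)

variable {d : ℕ}

theorem IsHammingSeparated.mono {C C' : Finset (ι → α)} (hC : IsHammingSeparated d C)
    (h : C' ⊆ C) : IsHammingSeparated d C' :=
  fun x hx y hy => hC x (h hx) y (h hy)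

theorem IsHammingSeparated.hammingApart {C A B : Finset (ι → α)} (hC : IsHammingSeparated d C)
    (hA : A ⊆ C) (hB : B ⊆ C) (hAB : Disjoint A B) : HammingApart d A B :=
  fun x hx y hy => hC x (hA hx) y (hB hy) fun h => disjoint_left.1 hAB hx (h ▸ hy)

theorem IsHammingSeparated.union {A B : Finset (ι → α)} (hA : IsHammingSeparated d A)
    (hB : IsHammingSeparated d B) (hAB : HammingApart d A B) : IsHammingSeparated d (A ∪ B) := by
  intro x hx y hy hxy
  rcases mem_union.1 hx with hx | hx <;> rcases mem_union.1 hy with hy | hy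
  · exact hA x hx y hy hxy
  · exact hAB x hx y hy
  · exact hammingDist_comm x y ▸ hAB y hy x hx
  · exact hB x hx y hy hxy

theorem HammingApart.mono_left {A A' B : Finset (ι → α)} (h : HammingApart d A B)
    (hA : A' ⊆ A) : HammingApart d A' B :=
  fun x hx => h x (hA hx)

theorem HammingApart.union_left {A B C : Finset (ι → α)} (hA : HammingApart d A C)
    (hB : HammingApart d B C) : HammingApart d (A ∪ B) C :=
  forall_mem_union.2 ⟨hA, hB⟩

theorem HammingApart.disjoint {A B : Finset (ι → α)} (hd : 0 < d) (h : HammingApart d A B) :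
    Disjoint A B :=
  disjoint_left.2 fun x hA hB => by simpa using (h x hA x hB).trans_lt' hd

theorem HammingSeparatesOn.isHammingSeparated_image [DecidableEq (ι → α)] {f : P → ι → α}
    {s : Finset P} (h : HammingSeparatesOn d f s) : IsHammingSeparated d (s.image f) := by
  simp only [IsHammingSeparated, forall_mem_image]
  exact fun u hu v hv huv => h u hu v hv fun h => huv (h ▸ rfl)

theorem HammingSeparatesOn.card_image [DecidableEq (ι → α)] {f : P → ι → α} {s : Finset P}
    (hd : 0 < d) (h : HammingSeparatesOn d f s) : (s.image f).card = s.card :=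
  card_image_of_injOn fun u hu v hv huv => by
    by_contra huv'
    simpa [huv] using (h u hu v hv huv').trans_lt' hd

theorem hammingSeparatesOn_inr {E : Finset (ι → β)} (hE : IsHammingSeparated d E) :
    HammingSeparatesOn d (fun e i => (Sum.inr (e i) : α ⊕ β)) E :=
  fun e he e' he' hee' => (hE e he e' he' hee').trans
    (hammingDist_le_hammingDist_of_ne fun i h => by simpa using h)

theorem hammingSeparatesOn_inl_pair {M : Finset (ι → α)} {D : Finset (ι → β)}
    (hM : IsHammingSeparated d M) (hD : IsHammingSeparated d D) :
    HammingSeparatesOn d (fun z i => (Sum.inl (z.1 i, z.2 i) : (α × β) ⊕ γ)) (M ×ˢ D) := by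
  rintro ⟨m, x⟩ hmx ⟨m', x'⟩ hmx' hne
  rw [mem_product] at hmx hmx'
  by_cases hm : m = m'
  · subst hm
    exact (hD x hmx.2 x' hmx'.2 fun h => hne (h ▸ rfl)).trans
      (hammingDist_le_hammingDist_of_ne fun i h => by simp [h])
  · exact (hM m hmx.1 m' hmx'.1 hm).trans
      (hammingDist_le_hammingDist_of_ne fun i h => by simp [h])

theorem hammingApart_image_inr_image_inl_pair [DecidableEq (ι → (α × β) ⊕ γ)]
    (hd : d ≤ Fintype.card ι) (E : Finset (ι → γ))
    (S : Finset ((ι → α) × (ι → β))) :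
    HammingApart d (E.image fun e i => (Sum.inr (e i) : (α × β) ⊕ γ))
      (S.image fun z i => Sum.inl (z.1 i, z.2 i)) := by
  simp only [HammingApart, forall_mem_image]
  intro e _ z _
  refine hd.trans (le_of_eq ?_)
  simp [hammingDist]

theorem card_isRight_le_of_forall_le_hammingDist {n k : ℕ} {z : Fin n → α ⊕ β}
    (h : ∀ w : Fin n → α ⊕ β, (∀ i, (w i).isRight) → k ≤ hammingDist z w) :
    #{i | (z i).isRight} ≤ n - k := by
  obtain hright | ⟨i₀, hi₀⟩ := (filter (fun i => (z i).isRight) univ).eq_empty_or_nonempty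
  · simp [hright]
  obtain ⟨b, -⟩ := Sum.isRight_iff.1 (mem_filter.1 hi₀).2
  set w : Fin n → α ⊕ β := fun i => Sum.inr ((z i).elim (fun _ => b) id)
  have hw : hammingDist z w ≤ #{i | ¬(z i).isRight} :=
    card_le_card <| monotone_filter_right _ fun i _ hne hright => hne <| by
      obtain ⟨c, hc⟩ := Sum.isRight_iff.1 hright
      simp [w, hc]
  have hsplit := card_filter_add_card_filter_not (s := univ) fun i => (z i).isRight
  have := h w fun i => rfl
  simp only [card_univ, Fintype.card_fin] at hsplit
  omega

end Hamming

theorem lt_hammingDist_of_inter_hammingNbhd_eq_empty {Q : Type} [DecidableEq Q] {n k : ℕ}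
    {C S : Set (Fin n → Q)} (h : C ∩ hammingNbhd k S = ∅) {x y : Fin n → Q} (hx : x ∈ C)
    (hy : y ∈ S) : k < hammingDist x y := by
  by_contra! hle
  exact Set.eq_empty_iff_forall_notMem.1 h x ⟨hx, y, hy, hle⟩

section Glue

variable {p q a d : ℕ}

theorem glue_apply (m : Fin 5 → Fin p) (z : Fin 5 → Fin q ⊕ Fin a) (i : Fin 5) :
    glue p q a (m, z) i = (z i).elim (fun y => Sum.inl (m i, y)) Sum.inr := by
  simp only [glue]
  cases z i <;> rfl

theorem map_snd_glue_apply (m : Fin 5 → Fin p) (z : Fin 5 → Fin q ⊕ Fin a) (i : Fin 5) :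
    Sum.map Prod.snd id (glue p q a (m, z) i) = z i := by
  rw [glue_apply]
  cases z i <;> rfl

theorem hammingDist_le_hammingDist_glue (m m' : Fin 5 → Fin p)
    (z z' : Fin 5 → Fin q ⊕ Fin a) :
    hammingDist z z' ≤ hammingDist (glue p q a (m, z)) (glue p q a (m', z')) :=
  hammingDist_le_hammingDist_of_ne fun i hz h => hz <| by
    rw [← map_snd_glue_apply m z, ← map_snd_glue_apply m' z', h]

theorem hammingDist_le_hammingDist_glue_inr (m : Fin 5 → Fin p) (z : Fin 5 → Fin q ⊕ Fin a)
    (e : Fin 5 → Fin a) :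
    hammingDist z (fun i => Sum.inr (e i)) ≤
      hammingDist (glue p q a (m, z)) (fun i => Sum.inr (e i)) :=
  hammingDist_le_hammingDist_of_ne fun i hz h => hz <| by
    rw [← map_snd_glue_apply m z, h, Sum.map_inr, id]

theorem hammingDist_le_hammingDist_glue_inl (m m' : Fin 5 → Fin p) (z : Fin 5 → Fin q ⊕ Fin a)
    (x : Fin 5 → Fin q) :
    hammingDist m m' ≤ hammingDist (glue p q a (m, z)) (fun i => Sum.inl (m' i, x i)) :=
  hammingDist_le_hammingDist_of_ne fun i hm h => hm <| by
    rw [glue_apply] at h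
    cases hz : z i <;> simp_all

theorem hammingDist_le_hammingDist_glue_add (m m' : Fin 5 → Fin p)
    (z z' : Fin 5 → Fin q ⊕ Fin a) :
    hammingDist m m' ≤
      hammingDist (glue p q a (m, z)) (glue p q a (m', z')) + #{i | (z i).isRight} := by
  refine (card_le_card fun i hi => ?_).trans (card_union_le _ _)
  simp only [mem_union, mem_filter, mem_univ, true_and] at hi ⊢
  by_contra! h
  simp only [glue_apply] at h
  cases hz : z i <;> cases hz' : z' i <;> simp_all

theorem le_hammingDist_glue {r : ℕ} {m m' : Fin 5 → Fin p} {z : Fin 5 → Fin q ⊕ Fin a}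
    (hm : d + r ≤ hammingDist m m') (hz : #{i | (z i).isRight} ≤ r)
    (z' : Fin 5 → Fin q ⊕ Fin a) :
    d ≤ hammingDist (glue p q a (m, z)) (glue p q a (m', z')) := by
  have := hammingDist_le_hammingDist_glue_add m m' z z'
  omega

theorem hammingSeparatesOn_glue {r : ℕ} {M : Finset (Fin 5 → Fin p)}
    {Z : Finset (Fin 5 → Fin q ⊕ Fin a)}
    (hM : IsHammingSeparated (d + r) M) (hZ : IsHammingSeparated d Z)
    (hr : ∀ z ∈ Z, #{i | (z i).isRight} ≤ r) :
    HammingSeparatesOn d (glue p q a) (M ×ˢ Z) := by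
  rintro ⟨m, z⟩ hmz ⟨m', z'⟩ hmz' hne
  rw [mem_product] at hmz hmz'
  by_cases hm : m = m'
  · subst hm
    exact (hZ z hmz.2 z' hmz'.2 fun h => hne (h ▸ rfl)).trans
      (hammingDist_le_hammingDist_glue m m z z')
  · exact le_hammingDist_glue (hM m hmz.1 m' hmz'.1 hm) (hr z hmz.2) z'

theorem hammingApart_image_inr_image_glue (E : Finset (Fin 5 → Fin a))
    (M : Finset (Fin 5 → Fin p)) {Z : Finset (Fin 5 → Fin q ⊕ Fin a)}
    (hZ : ∀ z ∈ Z, ∀ w : Fin 5 → Fin q ⊕ Fin a, (∀ i, (w i).isRight) →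
      d ≤ hammingDist z w) :
    HammingApart d (E.image fun e i => (Sum.inr (e i) : (Fin p × Fin q) ⊕ Fin a))
      ((M ×ˢ Z).image (glue p q a)) := by
  simp only [HammingApart, forall_mem_image, mem_product, Prod.forall, and_imp]
  intro e _ m z _ hz
  rw [hammingDist_comm]
  exact (hZ z hz _ fun i => rfl).trans (hammingDist_le_hammingDist_glue_inr m z e)

theorem hammingApart_image_glue_image_glue {r : ℕ} {M M' : Finset (Fin 5 → Fin p)}
    (Z : Finset (Fin 5 → Fin q ⊕ Fin a)) {Z' : Finset (Fin 5 → Fin q ⊕ Fin a)}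
    (hM : HammingApart (d + r) M M') (hr : ∀ z ∈ Z', #{i | (z i).isRight} ≤ r) :
    HammingApart d ((M ×ˢ Z).image (glue p q a)) ((M' ×ˢ Z').image (glue p q a)) := by
  simp only [HammingApart, forall_mem_image, mem_product, Prod.forall, and_imp]
  intro m z hm _ m' z' hm' hz'
  rw [hammingDist_comm]
  exact le_hammingDist_glue (hammingDist_comm m m' ▸ hM m hm m' hm') (hr z' hz') z

theorem hammingApart_image_glue_image_inl_pair {M M' : Finset (Fin 5 → Fin p)}
    (Z : Finset (Fin 5 → Fin q ⊕ Fin a)) (D : Finset (Fin 5 → Fin q))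
    (hM : HammingApart d M M') :
    HammingApart d ((M ×ˢ Z).image (glue p q a))
      ((M' ×ˢ D).image fun z i => Sum.inl (z.1 i, z.2 i)) := by
  simp only [HammingApart, forall_mem_image, mem_product, Prod.forall, and_imp]
  intro m z hm _ m' x hm' _
  exact (hM m hm m' hm').trans (hammingDist_le_hammingDist_glue_inl m m' z x)

end Glue

theorem wilson_card_sum {p q a : ℕ} (hp : 1 ≤ p) :
    a ^ 3 + p * ((q + a) ^ 3 - a ^ 3) + (p ^ 2 - p) * (q ^ 3 + 3 * q ^ 2 * a) +
      (p ^ 3 - p ^ 2) * q ^ 3 = ((p - 1) * q + (q + a)) ^ 3 := by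
  have : a ^ 3 ≤ (q + a) ^ 3 := Nat.pow_le_pow_left (Nat.le_add_left a q) 3
  have : p ≤ p ^ 2 := Nat.le_self_pow two_ne_zero p
  have : p ^ 2 ≤ p ^ 3 := Nat.pow_le_pow_right hp (by norm_num)
  zify [*]
  ring

theorem stmt_11_general (p q q₁ a : ℕ) (hp : 1 ≤ p) (ha : q + a = q₁)
    (M M₁ M₂ : Finset (Fin 5 → Fin p)) (h21 : M₂ ⊆ M₁) (h1 : M₁ ⊆ M)
    (hM : ∀ x ∈ M, ∀ y ∈ M, x ≠ y → 3 ≤ hammingDist x y) (hMc : M.card = p ^ 3)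
    (hM1 : ∀ x ∈ M₁, ∀ y ∈ M₁, x ≠ y → 4 ≤ hammingDist x y) (hM1c : M₁.card = p ^ 2)
    (hM2 : ∀ x ∈ M₂, ∀ y ∈ M₂, x ≠ y → 5 ≤ hammingDist x y) (hM2c : M₂.card = p)
    (D : Finset (Fin 5 → Fin q))
    (hD : ∀ x ∈ D, ∀ y ∈ D, x ≠ y → 3 ≤ hammingDist x y) (hDc : D.card = q ^ 3)
    (E : Finset (Fin 5 → Fin a))
    (hE : ∀ x ∈ E, ∀ y ∈ E, x ≠ y → 3 ≤ hammingDist x y) (hEc : E.card = a ^ 3)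
    (F : Finset (Fin 5 → Fin q ⊕ Fin a))
    (hF : ∀ x ∈ F, ∀ y ∈ F, x ≠ y → 3 ≤ hammingDist x y)
    (hFhole1 : ↑F ∩ hammingNbhd 3 {z : Fin 5 → Fin q ⊕ Fin a | ∀ i, (z i).isRight} = ∅)
    (hFc : F.card = q ^ 3 + 3 * q ^ 2 * a)
    (G : Finset (Fin 5 → Fin q ⊕ Fin a))
    (hG : ∀ x ∈ G, ∀ y ∈ G, x ≠ y → 3 ≤ hammingDist x y)
    (hGhole1 : ↑G ∩ hammingNbhd 2 {z : Fin 5 → Fin q ⊕ Fin a | ∀ i, (z i).isRight} = ∅)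
    (hGc : G.card = q₁ ^ 3 - a ^ 3) :
    (∀ x ∈ (E.image fun e (i : Fin 5) => (Sum.inr (e i) : (Fin p × Fin q) ⊕ Fin a)) ∪
        (M₂ ×ˢ G).image (glue p q a) ∪ ((M₁ \ M₂) ×ˢ F).image (glue p q a) ∪
        ((M \ M₁) ×ˢ D).image (fun z (i : Fin 5) =>
          (Sum.inl (z.1 i, z.2 i) : (Fin p × Fin q) ⊕ Fin a)),
      ∀ y ∈ (E.image fun e (i : Fin 5) => (Sum.inr (e i) : (Fin p × Fin q) ⊕ Fin a)) ∪
        (M₂ ×ˢ G).image (glue p q a) ∪ ((M₁ \ M₂) ×ˢ F).image (glue p q a) ∪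
        ((M \ M₁) ×ˢ D).image (fun z (i : Fin 5) =>
          (Sum.inl (z.1 i, z.2 i) : (Fin p × Fin q) ⊕ Fin a)),
        x ≠ y → 3 ≤ hammingDist x y) ∧
    ((E.image fun e (i : Fin 5) => (Sum.inr (e i) : (Fin p × Fin q) ⊕ Fin a)) ∪
        (M₂ ×ˢ G).image (glue p q a) ∪ ((M₁ \ M₂) ×ˢ F).image (glue p q a) ∪
        ((M \ M₁) ×ˢ D).image (fun z (i : Fin 5) =>
          (Sum.inl (z.1 i, z.2 i) : (Fin p × Fin q) ⊕ Fin a))).card =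
      ((p - 1) * q + q₁) ^ 3 := by
  have hFfar : ∀ f ∈ F, ∀ w : Fin 5 → Fin q ⊕ Fin a, (∀ i, (w i).isRight) →
      3 < hammingDist f w :=
    fun _ hf _ hw => lt_hammingDist_of_inter_hammingNbhd_eq_empty hFhole1 hf hw
  have hGfar : ∀ g ∈ G, ∀ w : Fin 5 → Fin q ⊕ Fin a, (∀ i, (w i).isRight) →
      2 < hammingDist g w :=
    fun _ hg _ hw => lt_hammingDist_of_inter_hammingNbhd_eq_empty hGhole1 hg hw
  have hFright : ∀ f ∈ F, #{i | (f i).isRight} ≤ 1 :=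
    fun f hf => card_isRight_le_of_forall_le_hammingDist (hFfar f hf)
  have hGright : ∀ g ∈ G, #{i | (g i).isRight} ≤ 2 :=
    fun g hg => card_isRight_le_of_forall_le_hammingDist (hGfar g hg)
  have hM₂M₁ : HammingApart 4 M₂ (M₁ \ M₂) :=
    IsHammingSeparated.hammingApart hM1 h21 sdiff_subset disjoint_sdiff
  have hM₁M : HammingApart 3 M₁ (M \ M₁) :=
    IsHammingSeparated.hammingApart hM h1 sdiff_subset disjoint_sdiff
  have sE := hammingSeparatesOn_inr (α := Fin p × Fin q) hE
  have sG := hammingSeparatesOn_glue (r := 2) hM2 hG hGright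
  have sF := hammingSeparatesOn_glue (r := 1) (M := M₁ \ M₂)
    (IsHammingSeparated.mono hM1 sdiff_subset) hF hFright
  have sD := hammingSeparatesOn_inl_pair (γ := Fin a) (M := M \ M₁)
    (IsHammingSeparated.mono hM sdiff_subset) hD
  have aEG := hammingApart_image_inr_image_glue E M₂ hGfar
  have aEGF := (hammingApart_image_inr_image_glue E (M₁ \ M₂) fun f hf w hw =>
    (hFfar f hf w hw).le).union_left (hammingApart_image_glue_image_glue G hM₂M₁ hFright)
  have aEGFD := ((hammingApart_image_inr_image_inl_pair (by simp) E ((M \ M₁) ×ˢ D)).union_left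
    (hammingApart_image_glue_image_inl_pair G D (hM₁M.mono_left h21))).union_left
    (hammingApart_image_glue_image_inl_pair F D (hM₁M.mono_left (sdiff_subset (t := M₂))))
  refine ⟨((sE.isHammingSeparated_image.union sG.isHammingSeparated_image aEG).union
    sF.isHammingSeparated_image aEGF).union sD.isHammingSeparated_image aEGFD, ?_⟩
  rw [card_union_of_disjoint (aEGFD.disjoint three_pos),
    card_union_of_disjoint (aEGF.disjoint three_pos),
    card_union_of_disjoint (aEG.disjoint three_pos), sE.card_image three_pos,
    sG.card_image three_pos, sF.card_image three_pos, sD.card_image three_pos, card_product,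
    card_product, card_product, card_sdiff_of_subset h21, card_sdiff_of_subset h1, hEc, hGc, hFc,
    hDc, hM2c, hM1c, hMc, ← ha]
  exact wilson_card_sum hp

/-- Theorem 1, the Wilson-type construction: given a super MDS(2,5,p)
chain `M₂ ⊂ M₁ ⊂ M`, an MDS(2,5,q) code `D`, an MDS(2,5,q₁-q) code `E` on the alphabet
`A` (`|A| = a = q₁ - q`), an MDS(2,5,q₁) code `F` with 4-A-hole and an MDS(2,5,q₁) code
`G` with 5-A-hole, the set
`C = E ∪ (M₂ ×_A G) ∪ ((M₁ \ M₂) ×_A F) ∪ ((M \ M₁) × D)`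
is an MDS(2,5,(p-1)q + q₁) code. -/
theorem stmt_11 (p q q₁ a : ℕ) (hp : 1 ≤ p) (ha : q + a = q₁)
    (M M₁ M₂ : Finset (Fin 5 → Fin p)) (h21 : M₂ ⊆ M₁) (h1 : M₁ ⊆ M)
    (hM : ∀ x ∈ M, ∀ y ∈ M, x ≠ y → 3 ≤ hammingDist x y) (hMc : M.card = p ^ 3)
    (hM1 : ∀ x ∈ M₁, ∀ y ∈ M₁, x ≠ y → 4 ≤ hammingDist x y) (hM1c : M₁.card = p ^ 2)
    (hM2 : ∀ x ∈ M₂, ∀ y ∈ M₂, x ≠ y → 5 ≤ hammingDist x y) (hM2c : M₂.card = p)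
    (D : Finset (Fin 5 → Fin q))
    (hD : ∀ x ∈ D, ∀ y ∈ D, x ≠ y → 3 ≤ hammingDist x y) (hDc : D.card = q ^ 3)
    (E : Finset (Fin 5 → Fin a))
    (hE : ∀ x ∈ E, ∀ y ∈ E, x ≠ y → 3 ≤ hammingDist x y) (hEc : E.card = a ^ 3)
    (F : Finset (Fin 5 → Fin q ⊕ Fin a))
    (hF : ∀ x ∈ F, ∀ y ∈ F, x ≠ y → 3 ≤ hammingDist x y)
    (hFhole1 : ↑F ∩ hammingNbhd 3 {z : Fin 5 → Fin q ⊕ Fin a | ∀ i, (z i).isRight} = ∅)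
    (hFhole2 : hammingNbhd 3 (↑F : Set (Fin 5 → Fin q ⊕ Fin a)) =
      {z : Fin 5 → Fin q ⊕ Fin a | ∀ i, (z i).isRight}ᶜ)
    (hFc : F.card = q ^ 3 + 3 * q ^ 2 * a)
    (G : Finset (Fin 5 → Fin q ⊕ Fin a))
    (hG : ∀ x ∈ G, ∀ y ∈ G, x ≠ y → 3 ≤ hammingDist x y)
    (hGhole1 : ↑G ∩ hammingNbhd 2 {z : Fin 5 → Fin q ⊕ Fin a | ∀ i, (z i).isRight} = ∅)
    (hGhole2 : hammingNbhd 2 (↑G : Set (Fin 5 → Fin q ⊕ Fin a)) =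
      {z : Fin 5 → Fin q ⊕ Fin a | ∀ i, (z i).isRight}ᶜ)
    (hGc : G.card = q₁ ^ 3 - a ^ 3) :
    (∀ x ∈ (E.image fun e (i : Fin 5) => (Sum.inr (e i) : (Fin p × Fin q) ⊕ Fin a)) ∪
        (M₂ ×ˢ G).image (glue p q a) ∪ ((M₁ \ M₂) ×ˢ F).image (glue p q a) ∪
        ((M \ M₁) ×ˢ D).image (fun z (i : Fin 5) =>
          (Sum.inl (z.1 i, z.2 i) : (Fin p × Fin q) ⊕ Fin a)),
      ∀ y ∈ (E.image fun e (i : Fin 5) => (Sum.inr (e i) : (Fin p × Fin q) ⊕ Fin a)) ∪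
        (M₂ ×ˢ G).image (glue p q a) ∪ ((M₁ \ M₂) ×ˢ F).image (glue p q a) ∪
        ((M \ M₁) ×ˢ D).image (fun z (i : Fin 5) =>
          (Sum.inl (z.1 i, z.2 i) : (Fin p × Fin q) ⊕ Fin a)),
        x ≠ y → 3 ≤ hammingDist x y) ∧
    ((E.image fun e (i : Fin 5) => (Sum.inr (e i) : (Fin p × Fin q) ⊕ Fin a)) ∪
        (M₂ ×ˢ G).image (glue p q a) ∪ ((M₁ \ M₂) ×ˢ F).image (glue p q a) ∪
        ((M \ M₁) ×ˢ D).image (fun z (i : Fin 5) =>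
          (Sum.inl (z.1 i, z.2 i) : (Fin p × Fin q) ⊕ Fin a))).card =
      ((p - 1) * q + q₁) ^ 3 :=
  stmt_11_general p q q₁ a hp ha M M₁ M₂ h21 h1 hM hMc hM1 hM1c hM2 hM2c D hD hDc E hE hEc F hF
    hFhole1 hFc G hG hGhole1 hGc
end

section
/- In the setting of the Wilson-type construction (Theorem 1), the Hamming distance between the codes (M \ M_1) × D and E equals 5, and the distance between (M_1 \ M_2) ×_A F and M_2 ×_A G is at least 3. -/
/-!
A word of `(M \ M₁) × D` uses only symbols outside `A` and a word of `E` only symbols of `A`,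
so they disagree everywhere. For the glued words, the first components lie in distinct words
of `M₁` and differ in at least 4 places; the 4-hole of `F` forces an element of `F` to carry at
most one symbol of `A`, and every other coordinate where the first components differ survives
the gluing, leaving at least 3.
-/

open Finset

theorem hammingDist_inl_inr {ι α β : Type*} [Fintype ι] [DecidableEq α] [DecidableEq β]
    (f : ι → α) (g : ι → β) :
    hammingDist (fun i => (Sum.inl (f i) : α ⊕ β)) (fun i => Sum.inr (g i)) =
      Fintype.card ι := by
  simp [hammingDist]

section HoleAlphabet

variable {α β : Type} [DecidableEq α] [DecidableEq β] {d : ℕ}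

/-- Replacing every left symbol of `x` by a fixed right symbol gives an all-right word. -/
theorem mem_hammingNbhd_allRight {x : Fin d → α ⊕ β} (hx : ∃ i, (x i).isRight) :
    x ∈ hammingNbhd #{i | ¬(x i).isRight} {z : Fin d → α ⊕ β | ∀ i, (z i).isRight} := by
  obtain ⟨i, hi⟩ := hx
  obtain ⟨b, -⟩ := Sum.isRight_iff.mp hi
  refine ⟨fun k => if (x k).isRight then x k else Sum.inr b, fun k => ?_, le_of_eq ?_⟩
  · by_cases h : (x k).isRight <;> simp [h]
  · unfold hammingDist
    congr 1
    ext k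
    by_cases h : (x k).isRight <;> cases hk : x k <;> simp_all

theorem card_isRight_lt_of_notMem_hammingNbhd {k : ℕ} (hk : k < d) {x : Fin d → α ⊕ β}
    (hx : x ∉ hammingNbhd k {z : Fin d → α ⊕ β | ∀ i, (z i).isRight}) :
    #{i | (x i).isRight} < d - k := by
  by_contra! hle
  have hsome : ∃ i, (x i).isRight := by
    obtain ⟨i, hi⟩ := card_pos.mp (by omega : 0 < #{i | (x i).isRight})
    exact ⟨i, (mem_filter.mp hi).2⟩
  obtain ⟨y, hy, hxy⟩ := mem_hammingNbhd_allRight hsome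
  have hsplit := card_filter_add_card_filter_not (s := (univ : Finset (Fin d)))
    fun i => (x i).isRight
  rw [card_univ, Fintype.card_fin] at hsplit
  exact hx ⟨y, hy, by omega⟩

end HoleAlphabet

theorem hammingDist_sub_card_isRight_le_hammingDist_glue (p q a : ℕ)
    (z w : (Fin 5 → Fin p) × (Fin 5 → Fin q ⊕ Fin a)) :
    hammingDist z.1 w.1 - #{i | (z.2 i).isRight} ≤ hammingDist (glue p q a z) (glue p q a w) := by
  have hsub : univ.filter (fun i => z.1 i ≠ w.1 i) \ univ.filter (fun i => (z.2 i).isRight) ⊆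
      univ.filter fun i => glue p q a z i ≠ glue p q a w i := by
    intro i hi
    simp only [mem_sdiff, mem_filter, mem_univ, true_and] at hi ⊢
    obtain ⟨hne, hleft⟩ := hi
    rcases hz : z.2 i with y | b
    · rcases hw : w.2 i with y' | b' <;> simp_all [glue]
    · simp [hz] at hleft
  exact (le_card_sdiff _ _).trans (card_le_card hsub)

theorem stmt_14_general (p q a : ℕ)
    (M M₁ M₂ : Finset (Fin 5 → Fin p)) (h21 : M₂ ⊆ M₁)
    (hM1 : ∀ x ∈ M₁, ∀ y ∈ M₁, x ≠ y → 4 ≤ hammingDist x y)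
    (D : Finset (Fin 5 → Fin q))
    (E : Finset (Fin 5 → Fin a))
    (F : Finset (Fin 5 → Fin q ⊕ Fin a))
    (hFhole1 : ↑F ∩ hammingNbhd 3 {z : Fin 5 → Fin q ⊕ Fin a | ∀ i, (z i).isRight} = ∅)
    (G : Finset (Fin 5 → Fin q ⊕ Fin a)) :
    (∀ z ∈ (M \ M₁) ×ˢ D, ∀ e ∈ E,
      hammingDist
        (fun i : Fin 5 => (Sum.inl (z.1 i, z.2 i) : (Fin p × Fin q) ⊕ Fin a))
        (fun i : Fin 5 => (Sum.inr (e i) : (Fin p × Fin q) ⊕ Fin a)) = 5) ∧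
    (∀ z ∈ (M₁ \ M₂) ×ˢ F, ∀ w ∈ M₂ ×ˢ G,
      3 ≤ hammingDist (glue p q a z) (glue p q a w)) := by
  refine ⟨fun z _ e _ => by simpa using hammingDist_inl_inr (fun i => (z.1 i, z.2 i)) e, ?_⟩
  intro z hz w hw
  simp only [mem_product, mem_sdiff] at hz hw
  have hright : #{i | (z.2 i).isRight} < 2 :=
    card_isRight_lt_of_notMem_hammingNbhd (by norm_num)
      fun h => (Set.eq_empty_iff_forall_notMem.mp hFhole1) z.2 ⟨hz.2, h⟩
  have hfirst : 4 ≤ hammingDist z.1 w.1 :=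
    hM1 z.1 hz.1.1 w.1 (h21 hw.1) fun h => hz.1.2 (h ▸ hw.1)
  have hglue := hammingDist_sub_card_isRight_le_hammingDist_glue p q a z w
  omega

/-- in the setting of the Wilson-type construction (Theorem 1), the
Hamming distance between the codes `(M \ M₁) × D` and `E` equals 5 (every pair of
points, one from each, is at distance exactly 5), and the distance between
`(M₁ \ M₂) ×_A F` and `M₂ ×_A G` is at least 3. -/
theorem stmt_14 (p q q₁ a : ℕ) (hp : 1 ≤ p) (ha : q + a = q₁)
    (M M₁ M₂ : Finset (Fin 5 → Fin p)) (h21 : M₂ ⊆ M₁) (h1 : M₁ ⊆ M)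
    (hM : ∀ x ∈ M, ∀ y ∈ M, x ≠ y → 3 ≤ hammingDist x y) (hMc : M.card = p ^ 3)
    (hM1 : ∀ x ∈ M₁, ∀ y ∈ M₁, x ≠ y → 4 ≤ hammingDist x y) (hM1c : M₁.card = p ^ 2)
    (hM2 : ∀ x ∈ M₂, ∀ y ∈ M₂, x ≠ y → 5 ≤ hammingDist x y) (hM2c : M₂.card = p)
    (D : Finset (Fin 5 → Fin q))
    (hD : ∀ x ∈ D, ∀ y ∈ D, x ≠ y → 3 ≤ hammingDist x y) (hDc : D.card = q ^ 3)
    (E : Finset (Fin 5 → Fin a))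
    (hE : ∀ x ∈ E, ∀ y ∈ E, x ≠ y → 3 ≤ hammingDist x y) (hEc : E.card = a ^ 3)
    (F : Finset (Fin 5 → Fin q ⊕ Fin a))
    (hF : ∀ x ∈ F, ∀ y ∈ F, x ≠ y → 3 ≤ hammingDist x y)
    (hFhole1 : ↑F ∩ hammingNbhd 3 {z : Fin 5 → Fin q ⊕ Fin a | ∀ i, (z i).isRight} = ∅)
    (hFhole2 : hammingNbhd 3 (↑F : Set (Fin 5 → Fin q ⊕ Fin a)) =
      {z : Fin 5 → Fin q ⊕ Fin a | ∀ i, (z i).isRight}ᶜ)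
    (hFc : F.card = q ^ 3 + 3 * q ^ 2 * a)
    (G : Finset (Fin 5 → Fin q ⊕ Fin a))
    (hG : ∀ x ∈ G, ∀ y ∈ G, x ≠ y → 3 ≤ hammingDist x y)
    (hGhole1 : ↑G ∩ hammingNbhd 2 {z : Fin 5 → Fin q ⊕ Fin a | ∀ i, (z i).isRight} = ∅)
    (hGhole2 : hammingNbhd 2 (↑G : Set (Fin 5 → Fin q ⊕ Fin a)) =
      {z : Fin 5 → Fin q ⊕ Fin a | ∀ i, (z i).isRight}ᶜ)
    (hGc : G.card = q₁ ^ 3 - a ^ 3) :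
    (∀ z ∈ (M \ M₁) ×ˢ D, ∀ e ∈ E,
      hammingDist
        (fun i : Fin 5 => (Sum.inl (z.1 i, z.2 i) : (Fin p × Fin q) ⊕ Fin a))
        (fun i : Fin 5 => (Sum.inr (e i) : (Fin p × Fin q) ⊕ Fin a)) = 5) ∧
    (∀ z ∈ (M₁ \ M₂) ×ˢ F, ∀ w ∈ M₂ ×ˢ G,
      3 ≤ hammingDist (glue p q a z) (glue p q a w)) :=
  stmt_14_general p q a M M₁ M₂ h21 hM1 D E F hFhole1 G
end

section
/- If D_2 ⊆ D_3 where D_2 is a Steiner system S(2,5,q) and D_3 is a Steiner system S(3,5,q) on the same point set Q_q, then there exists an MDS(2,5,q) code, i.e., a pair of orthogonal Latin cubes of order q. -/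
/-!
Two words `x ∈ M_X`, `y ∈ M_Y` agreeing on a set `A` of at least three coordinates share a
set of values `V ⊆ X ∩ Y` there. If `|V| ≥ 3`, then `X = Y` by the S(3,5,q) property.
Otherwise neither word is injective, so `X, Y ∈ D₂`: if `|V| = 2` then `X = Y` by the S(2,5,q)
property, and if `V = {a}` both words agree on `A` with the constant word `a`, which lies in
both codes. As distinct words of one block code agree in at most two places, any three
coordinates determine a word of `M`. Every triple of points starts a word of `M`: a triple of
distinct points via its D₃-block, `Alt(5)` being 3-transitive, and any other triple via a
D₂-block, the MDS(2,5,5) code being systematic. So projection onto the first three coordinates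
is a bijection `M ≃ Q³`.
-/

open Finset Function Equiv

variable {ι α Q : Type*}

section Agreement

variable [Fintype ι] [DecidableEq α]

def agreeSet (x y : ι → α) : Finset ι := {i | x i = y i}

theorem card_agreeSet_add_hammingDist (x y : ι → α) :
    #(agreeSet x y) + hammingDist x y = Fintype.card ι :=
  card_filter_add_card_filter_not _

theorem agreeSet_comp [DecidableEq Q] {e : α → Q} (he : Injective e) (x y : ι → α) :
    agreeSet (e ∘ x) (e ∘ y) = agreeSet x y := by
  simp [agreeSet, he.eq_iff]

def DeterminedByAnyCoords (k : ℕ) (C : Finset (ι → α)) : Prop :=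
  ∀ x ∈ C, ∀ y ∈ C, k ≤ #(agreeSet x y) → x = y

namespace DeterminedByAnyCoords

variable {k : ℕ} {C : Finset (ι → α)}

theorem card_lt_add_hammingDist (hC : DeterminedByAnyCoords k C) {x y : ι → α}
    (hx : x ∈ C) (hy : y ∈ C) (hxy : x ≠ y) : Fintype.card ι < k + hammingDist x y := by
  have hagree : #(agreeSet x y) < k := lt_of_not_ge fun h => hxy (hC x hx y hy h)
  have := card_agreeSet_add_hammingDist x y
  omega

theorem eq_const (hC : DeterminedByAnyCoords k C) {z : ι → α} (hz : z ∈ C) {a : α}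
    (ha : (fun _ => a) ∈ C) {A : Finset ι} (hA : k ≤ #A) (hzA : ∀ i ∈ A, z i = a) :
    z = fun _ => a :=
  hC z hz _ ha (hA.trans (card_le_card fun i hi => mem_filter.2 ⟨mem_univ i, hzA i hi⟩))

theorem map [DecidableEq Q] (hC : DeterminedByAnyCoords k C) (e : α ↪ Q) :
    DeterminedByAnyCoords k (C.map e.arrowCongrRight) := by
  simp only [DeterminedByAnyCoords, forall_mem_map, Embedding.arrowCongrRight_apply,
    agreeSet_comp e.injective]
  intro x hx y hy h
  rw [hC x hx y hy h]

end DeterminedByAnyCoords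

end Agreement

theorem DeterminedByAnyCoords.card_eq_pow [Fintype α] [DecidableEq α] {n k : ℕ} (hk : k ≤ n)
    {C : Finset (Fin n → α)} (hC : DeterminedByAnyCoords k C)
    (hsurj : ∀ v : Fin k → α, ∃ x ∈ C, Fin.take k hk x = v) :
    #C = Fintype.card α ^ k := by
  have hinj : Set.InjOn (Fin.take k hk) (C : Set (Fin n → α)) := by
    intro x hx y hy hxy
    refine hC x hx y hy ?_
    calc k = #(univ.map (Fin.castLEEmb hk)) := by simp
      _ ≤ #(agreeSet x y) := card_le_card fun i hi => ?_
    obtain ⟨j, -, rfl⟩ := mem_map.1 hi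
    simpa [agreeSet] using congrFun hxy j
  have himage : C.image (Fin.take k hk) = univ := eq_univ_of_forall fun v => by
    obtain ⟨x, hx, rfl⟩ := hsurj v
    exact mem_image_of_mem _ hx
  rw [← card_image_of_injOn hinj, himage, card_univ, Fintype.card_fun, Fintype.card_fin]

theorem exists_code_of_card_le_one [Fintype Q] [DecidableEq Q] {n k d : ℕ}
    (hQ : Fintype.card Q ≤ 1) (hn : n ≠ 0) (hk : k ≠ 0) :
    ∃ C : Finset (Fin n → Q),
      (∀ x ∈ C, ∀ y ∈ C, x ≠ y → d ≤ hammingDist x y) ∧ #C = Fintype.card Q ^ k := by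
  have : Subsingleton Q := Fintype.card_le_one_iff_subsingleton.1 hQ
  refine ⟨univ, fun x _ y _ hxy => absurd (Subsingleton.elim x y) hxy, ?_⟩
  rw [card_univ, Fintype.card_fun, Fintype.card_fin]
  interval_cases Fintype.card Q <;> simp [hn, hk]

def CoversUniquely (t : ℕ) (D : Finset (Finset Q)) : Prop :=
  ∀ T : Finset Q, #T = t → ∃! X, X ∈ D ∧ T ⊆ X

namespace CoversUniquely

variable {t : ℕ} {D : Finset (Finset Q)}

theorem exists_superset [Fintype Q] (hD : CoversUniquely t D) {S : Finset Q} (hS : #S ≤ t)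
    (ht : t ≤ Fintype.card Q) : ∃ X ∈ D, S ⊆ X := by
  obtain ⟨T, hST, hT⟩ := exists_superset_card_eq hS ht
  obtain ⟨X, ⟨hX, hTX⟩, -⟩ := hD T hT
  exact ⟨X, hX, hST.trans hTX⟩

theorem eq_of_subset (hD : CoversUniquely t D) {T X Y : Finset Q} (hT : t ≤ #T)
    (hX : X ∈ D) (hY : Y ∈ D) (hTX : T ⊆ X) (hTY : T ⊆ Y) : X = Y := by
  obtain ⟨S, hST, hS⟩ := exists_subset_card_eq hT
  exact (hD S hS).unique ⟨hX, hST.trans hTX⟩ ⟨hY, hST.trans hTY⟩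

end CoversUniquely

section Assembly

variable [DecidableEq Q] {D₂ D₃ : Finset (Finset Q)}

theorem determinedByAnyCoords_biUnion [Fintype ι] (hD₂ : CoversUniquely 2 D₂)
    (hD₃ : CoversUniquely 3 D₃) {M : Finset Q → Finset (ι → Q)}
    (hval : ∀ X ∈ D₃, ∀ x ∈ M X, ∀ i, x i ∈ X)
    (hdet : ∀ X ∈ D₃, DeterminedByAnyCoords 3 (M X))
    (hinj : ∀ X ∈ D₃, X ∉ D₂ → ∀ x ∈ M X, Injective x)
    (hconst : ∀ X ∈ D₂, ∀ a ∈ X, (fun _ => a) ∈ M X) :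
    DeterminedByAnyCoords 3 (D₃.biUnion M) := by
  intro x hx y hy hA
  obtain ⟨X, hX, hxX⟩ := mem_biUnion.1 hx
  obtain ⟨Y, hY, hyY⟩ := mem_biUnion.1 hy
  set A := agreeSet x y
  set V := A.image x
  have hVy : A.image y = V := image_congr fun i hi => ((mem_filter.1 hi).2).symm
  have image_subset : ∀ Z ∈ D₃, ∀ z ∈ M Z, A.image z ⊆ Z := fun Z hZ z hz =>
    image_subset_iff.2 fun i _ => hval Z hZ z hz i
  have hVX : V ⊆ X := image_subset X hX x hxX
  have hVY : V ⊆ Y := hVy ▸ image_subset Y hY y hyY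
  rcases le_or_gt 3 #V with hV₃ | hV₃
  · obtain rfl := hD₃.eq_of_subset hV₃ hX hY hVX hVY
    exact hdet X hX x hxX y hyY hA
  -- fewer than three values on at least three coordinates: neither word is injective
  have mem_D₂ : ∀ Z ∈ D₃, ∀ z ∈ M Z, A.image z = V → Z ∈ D₂ := fun Z hZ z hz hzV => by
    by_contra hZ₂
    rw [← hzV, card_image_of_injective A (hinj Z hZ hZ₂ z hz)] at hV₃
    omega
  have hX₂ := mem_D₂ X hX x hxX rfl
  have hY₂ := mem_D₂ Y hY y hyY hVy
  rcases le_or_gt 2 #V with hV₂ | hV₁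
  · obtain rfl := hD₂.eq_of_subset hV₂ hX₂ hY₂ hVX hVY
    exact hdet X hX x hxX y hyY hA
  obtain ⟨a, hVa⟩ : ∃ a, V = {a} := card_eq_one.1 <| by
    have : 0 < #V := card_pos.2 (image_nonempty.2 (card_pos.1 (by omega)))
    omega
  have eq_const : ∀ Z ∈ D₃, Z ∈ D₂ → ∀ z ∈ M Z, A.image z = V → z = fun _ => a :=
    fun Z hZ hZ₂ z hz hzV => (hdet Z hZ).eq_const hz
      (hconst Z hZ₂ a (image_subset Z hZ z hz (hzV ▸ hVa ▸ mem_singleton_self a))) hA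
      fun i hi => mem_singleton.1 (hVa ▸ hzV ▸ mem_image_of_mem z hi)
  rw [eq_const X hX hX₂ x hxX rfl, eq_const Y hY hY₂ y hyY hVy]

theorem exists_take_eq_biUnion [Fintype Q] {n : ℕ} (hn : 3 ≤ n) (hQ : 2 ≤ Fintype.card Q)
    (hD₂ : CoversUniquely 2 D₂) (hD₃ : CoversUniquely 3 D₃) (hsub : D₂ ⊆ D₃)
    {M : Finset Q → Finset (Fin n → Q)}
    (hsurj₂ : ∀ X ∈ D₂, ∀ v : Fin 3 → Q, (∀ i, v i ∈ X) → ∃ x ∈ M X, Fin.take 3 hn x = v)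
    (hsurj₃ : ∀ X ∈ D₃, X ∉ D₂ → ∀ v : Fin 3 → Q, Injective v → (∀ i, v i ∈ X) →
      ∃ x ∈ M X, Fin.take 3 hn x = v)
    (v : Fin 3 → Q) : ∃ x ∈ D₃.biUnion M, Fin.take 3 hn x = v := by
  suffices ∃ X ∈ D₃, ∃ x ∈ M X, Fin.take 3 hn x = v by
    obtain ⟨X, hX, x, hx, rfl⟩ := this
    exact ⟨x, mem_biUnion.2 ⟨X, hX, hx⟩, rfl⟩
  have hvS : ∀ i, v i ∈ univ.image v := fun i => mem_image_of_mem v (mem_univ i)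
  by_cases hv : Injective v
  · have hS : #(univ.image v) = 3 := by rw [card_image_of_injective _ hv]; rfl
    obtain ⟨X, hX, hSX⟩ := hD₃.exists_superset hS.le (hS ▸ card_le_univ _)
    by_cases hX₂ : X ∈ D₂
    · exact ⟨X, hX, hsurj₂ X hX₂ v fun i => hSX (hvS i)⟩
    · exact ⟨X, hX, hsurj₃ X hX hX₂ v hv fun i => hSX (hvS i)⟩
  · have hS : #(univ.image v) ≤ 2 := by
      have hne : #(univ.image v) ≠ 3 := fun h =>
        hv (Set.injOn_univ.1 (by simpa using card_image_iff.1 h))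
      have := card_image_le (s := univ) (f := v)
      simp only [card_univ, Fintype.card_fin] at this
      omega
    obtain ⟨X, hX₂, hSX⟩ := hD₂.exists_superset hS hQ
    exact ⟨X, hsub hX₂, hsurj₂ X hX₂ v fun i => hSX (hvS i)⟩

end Assembly

-- Both check coefficient sums are `1` in `ZMod 5`, so the constant words are codewords.
def mdsWord (a b c : ZMod 5) : Fin 5 → ZMod 5 :=
  ![a, b, c, a + 2 * b + 3 * c, 3 * a + 2 * b + c]

def mdsCode : Finset (Fin 5 → ZMod 5) :=
  univ.image fun v : Fin 3 → ZMod 5 => mdsWord (v 0) (v 1) (v 2)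

theorem mdsWord_sub (a b c a' b' c' : ZMod 5) :
    mdsWord a b c - mdsWord a' b' c' = mdsWord (a - a') (b - b') (c - c') := by
  funext i
  fin_cases i <;> simp [mdsWord] <;> ring

theorem eq_zero_of_three_le_card_zeros_mdsWord : ∀ a b c : ZMod 5,
    3 ≤ #{i | mdsWord a b c i = 0} → a = 0 ∧ b = 0 ∧ c = 0 := by
  decide

theorem determinedByAnyCoords_mdsCode : DeterminedByAnyCoords 3 mdsCode := by
  simp only [DeterminedByAnyCoords, mdsCode, forall_mem_image, mem_univ, forall_const]
  intro u v h
  have hzeros : agreeSet (mdsWord (u 0) (u 1) (u 2)) (mdsWord (v 0) (v 1) (v 2)) =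
      ({i | mdsWord (u 0 - v 0) (u 1 - v 1) (u 2 - v 2) i = 0} : Finset (Fin 5)) := by
    ext i
    simp [agreeSet, ← mdsWord_sub, sub_eq_zero]
  rw [hzeros] at h
  obtain ⟨h0, h1, h2⟩ := eq_zero_of_three_le_card_zeros_mdsWord _ _ _ h
  rw [sub_eq_zero.1 h0, sub_eq_zero.1 h1, sub_eq_zero.1 h2]

theorem const_mem_mdsCode (a : ZMod 5) : (fun _ => a) ∈ mdsCode :=
  mem_image.2 ⟨fun _ => a, mem_univ _, by revert a; decide⟩

theorem exists_take_eq_mdsCode (v : Fin 3 → ZMod 5) :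
    ∃ x ∈ mdsCode, Fin.take 3 (by norm_num) x = v :=
  ⟨_, mem_image_of_mem _ (mem_univ v), by funext i; fin_cases i <;> rfl⟩

def altCode (n : ℕ) : Finset (Fin n → Fin n) :=
  univ.image fun σ : alternatingGroup (Fin n) => ⇑(σ : Perm (Fin n))

theorem Equiv.Perm.eq_one_of_card_support_le_two {β : Type*} [Fintype β] [DecidableEq β]
    {ρ : Perm β} (hρ : Perm.sign ρ = 1) (h : #ρ.support ≤ 2) : ρ = 1 := by
  interval_cases hcard : #ρ.support
  · exact Perm.support_eq_empty_iff.1 (card_eq_zero.1 hcard)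
  · exact absurd hcard (Perm.card_support_ne_one ρ)
  · rw [(Perm.card_support_eq_two.1 hcard).sign_eq] at hρ
    exact absurd hρ (by decide)

theorem determinedByAnyCoords_altCode (k : ℕ) : DeterminedByAnyCoords k (altCode (k + 2)) := by
  simp only [DeterminedByAnyCoords, altCode, forall_mem_image, mem_univ, forall_const]
  intro σ τ h
  suffices (τ⁻¹ * σ : Perm (Fin (k + 2))) = 1 by rw [inv_mul_eq_one.1 this]
  refine Perm.eq_one_of_card_support_le_two ?_ ?_
  · simp [Perm.mem_alternatingGroup.1 σ.2, Perm.mem_alternatingGroup.1 τ.2]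
  · have hsupp : (τ⁻¹ * σ : Perm (Fin (k + 2))).support ⊆ (agreeSet ⇑(σ : Perm _) ⇑(τ : Perm _))ᶜ :=
      fun i hi => by simpa [agreeSet, Equiv.eq_symm_apply, eq_comm] using hi
    have := card_le_card hsupp
    rw [card_compl, Fintype.card_fin] at this
    omega

theorem injective_of_mem_altCode {n : ℕ} {x : Fin n → Fin n} (hx : x ∈ altCode n) :
    Injective x := by
  obtain ⟨σ, -, rfl⟩ := mem_image.1 hx
  exact (σ : Perm (Fin n)).injective

theorem exists_take_eq_altCode {k : ℕ} {v : Fin k → Fin (k + 2)} (hv : Injective v) :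
    ∃ x ∈ altCode (k + 2), Fin.take k (by omega) x = v := by
  have htrans := alternatingGroup.isMultiplyPretransitive (Fin (k + 2))
  rw [Nat.card_fin, Nat.add_sub_cancel] at htrans
  obtain ⟨σ, hσ⟩ := MulAction.exists_smul_eq (alternatingGroup (Fin (k + 2)))
    (Fin.castLEEmb (by omega)) ⟨v, hv⟩
  exact ⟨_, mem_image_of_mem _ (mem_univ σ), funext fun i => congrArg (· i) hσ⟩

noncomputable def Finset.enum [Fintype α] (X : Finset Q) (h : Fintype.card α = #X) : α ↪ Q :=
  (Fintype.equivOfCardEq (h.trans (Fintype.card_coe X).symm)).toEmbedding.trans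
    (Embedding.subtype _)

theorem Finset.range_enum [Fintype α] (X : Finset Q) (h : Fintype.card α = #X) :
    Set.range (X.enum h) = X := by
  simp only [Finset.enum, Embedding.coe_trans, Equiv.coe_toEmbedding, Embedding.coe_subtype,
    Set.range_comp, EquivLike.range_eq_univ, Set.image_univ, Subtype.range_coe_subtype,
    Finset.setOfPred_mem]

theorem Finset.apply_mem_of_mem_map_enum [Fintype α] {X : Finset Q} {h : Fintype.card α = #X}
    {C : Finset (ι → α)} {x : ι → Q} (hx : x ∈ C.map (X.enum h).arrowCongrRight) (i : ι) :
    x i ∈ X := by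
  obtain ⟨y, -, rfl⟩ := mem_map.1 hx
  exact mem_coe.1 (X.range_enum h ▸ Set.mem_range_self (y i))

theorem Finset.exists_enum_comp_eq [Fintype α] {X : Finset Q} (h : Fintype.card α = #X)
    {v : ι → Q} (hv : ∀ i, v i ∈ X) : ∃ w : ι → α, X.enum h ∘ w = v := by
  obtain ⟨w, hw⟩ := Set.range_subset_range_iff_exists_comp.1 <| Set.range_subset_iff.2 fun i => by
    rw [X.range_enum h]
    exact hv i
  exact ⟨w, hw.symm⟩

section BlockCode

variable [DecidableEq Q]

-- The code `M_X` of a block `X`: a copy of the MDS(2,5,5) code if `X ∈ D₂`, of `Alt(5)` otherwise.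
noncomputable def blockCode (D₂ : Finset (Finset Q)) (X : Finset Q) : Finset (Fin 5 → Q) :=
  if hX : #X = 5 then
    if X ∈ D₂ then mdsCode.map (X.enum ((ZMod.card 5).trans hX.symm)).arrowCongrRight
    else (altCode 5).map (X.enum ((Fintype.card_fin 5).trans hX.symm)).arrowCongrRight
  else ∅

variable {D₂ : Finset (Finset Q)} {X : Finset Q}

theorem apply_mem_of_mem_blockCode {x : Fin 5 → Q} (hx : x ∈ blockCode D₂ X) (i : Fin 5) :
    x i ∈ X := by
  unfold blockCode at hx
  split_ifs at hx
  · exact apply_mem_of_mem_map_enum hx i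
  · exact apply_mem_of_mem_map_enum hx i
  · exact absurd hx (notMem_empty x)

theorem determinedByAnyCoords_blockCode : DeterminedByAnyCoords 3 (blockCode D₂ X) := by
  unfold blockCode
  split_ifs
  · exact determinedByAnyCoords_mdsCode.map _
  · exact (determinedByAnyCoords_altCode 3).map _
  · exact fun x hx => absurd hx (notMem_empty x)

theorem injective_of_mem_blockCode (hX₂ : X ∉ D₂) {x : Fin 5 → Q} (hx : x ∈ blockCode D₂ X) :
    Injective x := by
  unfold blockCode at hx
  split_ifs at hx
  · obtain ⟨y, hy, rfl⟩ := mem_map.1 hx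
    rw [Embedding.arrowCongrRight_apply]
    exact (Embedding.injective _).comp (injective_of_mem_altCode hy)
  · exact absurd hx (notMem_empty x)

theorem const_mem_blockCode (hX : #X = 5) (hX₂ : X ∈ D₂) {a : Q} (ha : a ∈ X) :
    (fun _ => a) ∈ blockCode D₂ X := by
  rw [blockCode, dif_pos hX, if_pos hX₂]
  obtain ⟨w, hw⟩ :=
    X.exists_enum_comp_eq ((ZMod.card 5).trans hX.symm) (v := fun _ : Fin 1 => a) fun _ => ha
  exact mem_map.2 ⟨fun _ => w 0, const_mem_mdsCode _, funext fun _ => congrFun hw 0⟩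

theorem exists_take_eq_blockCode_of_mem (hX : #X = 5) (hX₂ : X ∈ D₂) {v : Fin 3 → Q}
    (hv : ∀ i, v i ∈ X) : ∃ x ∈ blockCode D₂ X, Fin.take 3 (by norm_num) x = v := by
  rw [blockCode, dif_pos hX, if_pos hX₂]
  obtain ⟨w, rfl⟩ := X.exists_enum_comp_eq ((ZMod.card 5).trans hX.symm) hv
  obtain ⟨x, hx, rfl⟩ := exists_take_eq_mdsCode w
  exact ⟨_, mem_map_of_mem _ hx, rfl⟩

theorem exists_take_eq_blockCode_of_notMem (hX : #X = 5) (hX₂ : X ∉ D₂) {v : Fin 3 → Q}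
    (hinj : Injective v) (hv : ∀ i, v i ∈ X) :
    ∃ x ∈ blockCode D₂ X, Fin.take 3 (by norm_num) x = v := by
  rw [blockCode, dif_pos hX, if_neg hX₂]
  obtain ⟨w, rfl⟩ := X.exists_enum_comp_eq ((Fintype.card_fin 5).trans hX.symm) hv
  obtain ⟨x, hx, rfl⟩ := exists_take_eq_altCode (Injective.of_comp hinj)
  exact ⟨_, mem_map_of_mem _ hx, rfl⟩

end BlockCode

theorem stmt_16_general {Q : Type} [Fintype Q] [DecidableEq Q] (q : ℕ)
    (hq : Fintype.card Q = q)
    (D₂ D₃ : Finset (Finset Q)) (hsub : D₂ ⊆ D₃)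
    (h2 : ∀ T : Finset Q, T.card = 2 → ∃! X, X ∈ D₂ ∧ T ⊆ X)
    (h3blocks : ∀ X ∈ D₃, X.card = 5)
    (h3 : ∀ T : Finset Q, T.card = 3 → ∃! X, X ∈ D₃ ∧ T ⊆ X) :
    ∃ C : Finset (Fin 5 → Q),
      (∀ x ∈ C, ∀ y ∈ C, x ≠ y → 3 ≤ hammingDist x y) ∧ C.card = q ^ 3 := by
  subst hq
  rcases le_or_gt (Fintype.card Q) 1 with hQ | hQ
  -- for `q = 1` the designs may be empty, and the code is all of `Q⁵`
  · exact exists_code_of_card_le_one hQ (by norm_num) (by norm_num)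
  have hdet : DeterminedByAnyCoords 3 (D₃.biUnion (blockCode D₂)) :=
    determinedByAnyCoords_biUnion h2 h3 (fun _ _ _ => apply_mem_of_mem_blockCode)
      (fun _ _ => determinedByAnyCoords_blockCode) (fun _ _ => injective_of_mem_blockCode)
      fun X hX₂ _ => const_mem_blockCode (h3blocks X (hsub hX₂)) hX₂
  refine ⟨_, fun x hx y hy hxy => ?_, hdet.card_eq_pow (by norm_num) fun v => ?_⟩
  · have := hdet.card_lt_add_hammingDist hx hy hxy
    rw [Fintype.card_fin] at this
    omega
  · exact exists_take_eq_biUnion (by norm_num) hQ h2 h3 hsub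
      (fun X hX₂ _ => exists_take_eq_blockCode_of_mem (h3blocks X (hsub hX₂)) hX₂)
      (fun X hX hX₂ _ => exists_take_eq_blockCode_of_notMem (h3blocks X hX) hX₂) v

/-- if `D₂ ⊆ D₃` where `D₂` is a Steiner system S(2,5,q) and `D₃` is a
Steiner system S(3,5,q) on the same `q`-element point set `Q`, then there exists an
MDS(2,5,q) code (a subset of `Q⁵` with minimum Hamming distance 3 and cardinality `q³`),
i.e. a pair of orthogonal latin cubes of order `q`. -/
theorem stmt_16 {Q : Type} [Fintype Q] [DecidableEq Q] (q : ℕ)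
    (hq : Fintype.card Q = q)
    (D₂ D₃ : Finset (Finset Q)) (hsub : D₂ ⊆ D₃)
    (h2blocks : ∀ X ∈ D₂, X.card = 5)
    (h2 : ∀ T : Finset Q, T.card = 2 → ∃! X, X ∈ D₂ ∧ T ⊆ X)
    (h3blocks : ∀ X ∈ D₃, X.card = 5)
    (h3 : ∀ T : Finset Q, T.card = 3 → ∃! X, X ∈ D₃ ∧ T ⊆ X) :
    ∃ C : Finset (Fin 5 → Q),
      (∀ x ∈ C, ∀ y ∈ C, x ≠ y → 3 ≤ hammingDist x y) ∧ C.card = q ^ 3 :=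
  stmt_16_general q hq D₂ D₃ hsub h2 h3blocks h3
end
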